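/- For any string S, the sequence FP(S) uniquely determines PD(S): if FP(S1) = FP(S2) for equal-length strings S1, S2, then PD(S1) = PD(S2), and conversely. -/
import Mathlib


open List

inductive Shape where
  | nil : Shape
  | node : Shape → Shape → Shape
deriving DecidableEq

inductive BTree (α : Type*) where
  | nil : BTree α
  | node : BTree α → α → BTree α → BTree α

def BTree.shape {α : Type*} : BTree α → Shape
  | .nil => .nil
  | .node l _ r => .node l.shape r.shape

def BTree.rootVal {α : Type*} : BTree α → Option α
  | .nil => none
  | .node _ v _ => some v

section
variable {α : Type*} [LinearOrder α] [Inhabited α]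

/-- Parent-distance value at 1-based position `i` of `S`. -/
def pdVal (S : List α) (i : ℕ) : ℕ :=
  let J := (Finset.Ico 1 i).filter (fun j => S.getD (j-1) default ≤ S.getD (i-1) default)
  if h : J.Nonempty then i - J.max' h else 0

/-- Parent-distance encoding of `S` (1-based positions). -/
def PD (S : List α) : List ℕ := (List.range S.length).map (fun k => pdVal S (k+1))

/-- 0-based index of the leftmost minimum of `S`. -/
def leftmostMinIdx (S : List α) : ℕ :=
  ((List.range S.length).argmin (fun j => S.getD j default)).getD 0

def CTaux : ℕ → List α → BTree α
  | 0, _ => .nil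
  | (n+1), S =>
    if S.isEmpty then .nil else
      let i := leftmostMinIdx S
      .node (CTaux n (S.take i)) (S.getD i default) (CTaux n (S.drop (i+1)))

/-- The (labeled) Cartesian tree of `S`. -/
def CT (S : List α) : BTree α := CTaux S.length S

/-- Front pointers of a sequence `u` of naturals (1-based positions `k ≥ 2` with `k - u[k] = 1`). -/
def frontPointers (u : List ℕ) : Finset ℕ :=
  (Finset.Icc 2 u.length).filter (fun k => k - u.getD (k-1) 0 = 1)

/-- `FP(S)[i]`: number of front pointers of `PD(S[i..])` (1-based `i`). -/
def FPval (S : List α) (i : ℕ) : ℕ := (frontPointers (PD (S.drop (i-1)))).card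

/-- The FP encoding of `S`. -/
def FP (S : List α) : List ℕ := (List.range S.length).map (fun k => FPval S (k+1))

end

section
variable {α : Type*} [LinearOrder α] [Inhabited α]

def Jset (S : List α) (i : ℕ) : Finset ℕ :=
  (Finset.Ico 1 i).filter (fun j => S.getD (j-1) default ≤ S.getD (i-1) default)

lemma pdVal_eq (S : List α) (i : ℕ) :
    pdVal S i = if h : (Jset S i).Nonempty then i - (Jset S i).max' h else 0 := rfl

lemma mem_Jset {S : List α} {i j : ℕ} :
    j ∈ Jset S i ↔ 1 ≤ j ∧ j < i ∧ S.getD (j-1) default ≤ S.getD (i-1) default := by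
  simp [Jset, and_assoc]

lemma pdVal_le (S : List α) (i : ℕ) : pdVal S i ≤ i - 1 := by
  rw [pdVal_eq]
  split
  · next h =>
    have := (mem_Jset.mp (Finset.max'_mem _ h)).1
    omega
  · omega

lemma pdVal_eq_zero_iff {S : List α} {i : ℕ} :
    pdVal S i = 0 ↔ ∀ j, 1 ≤ j → j < i → ¬ S.getD (j-1) default ≤ S.getD (i-1) default := by
  rw [pdVal_eq]
  constructor
  · intro h j h1 h2 hle
    by_cases hne : (Jset S i).Nonempty
    · rw [dif_pos hne] at h
      have hm := mem_Jset.mp (Finset.max'_mem _ hne)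
      omega
    · exact hne ⟨j, mem_Jset.mpr ⟨h1, h2, hle⟩⟩
  · intro h
    rw [dif_neg]
    rintro ⟨j, hj⟩
    rw [mem_Jset] at hj
    exact h j hj.1 hj.2.1 hj.2.2

lemma pdVal_one (S : List α) : pdVal S 1 = 0 := by
  rw [pdVal_eq_zero_iff]; intro j h1 h2; omega

lemma pdVal_cons (a : α) (T : List α) {m : ℕ} (hm : 2 ≤ m) :
    pdVal (a :: T) m =
      if pdVal T (m-1) ≠ 0 then pdVal T (m-1)
      else if a ≤ T.getD (m-2) default then m - 1 else 0 := by
  have hget : (a :: T).getD (m-1) default = T.getD (m-2) default := by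
    obtain ⟨m', rfl⟩ : ∃ m', m = m' + 2 := ⟨m - 2, by omega⟩
    rfl
  have hmem1 : ∀ j, 1 ≤ j → (j + 1 ∈ Jset (a::T) m ↔ j ∈ Jset T (m-1)) := by
    intro j hj
    obtain ⟨j', rfl⟩ : ∃ j', j = j' + 1 := ⟨j - 1, by omega⟩
    rw [mem_Jset, mem_Jset, hget]
    simp only [Nat.add_sub_cancel, List.getD_cons_succ, Nat.sub_sub]
    constructor <;> rintro ⟨h1, h2, h3⟩ <;> exact ⟨by omega, by omega, h3⟩
  have hmem_one : (1 ∈ Jset (a::T) m) ↔ a ≤ T.getD (m-2) default := by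
    rw [mem_Jset, hget]
    simp only [Nat.sub_self, List.getD_cons_zero]
    constructor
    · exact fun h => h.2.2
    · exact fun h => ⟨le_refl 1, by omega, h⟩
  by_cases hne : (Jset T (m-1)).Nonempty
  · have hMmem := Finset.max'_mem _ hne
    set M := (Jset T (m-1)).max' hne with hM
    have hM1 : 1 ≤ M := (mem_Jset.mp hMmem).1
    have hMlt : M < m - 1 := (mem_Jset.mp hMmem).2.1
    have hMin : M + 1 ∈ Jset (a::T) m := (hmem1 M hM1).mpr hMmem
    have hne' : (Jset (a::T) m).Nonempty := ⟨M + 1, hMin⟩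
    have hmax : (Jset (a::T) m).max' hne' = M + 1 := by
      apply Nat.le_antisymm
      · apply Finset.max'_le
        intro x hx
        rcases Nat.lt_or_ge x 2 with h2 | h2
        · omega
        · have : x - 1 ∈ Jset T (m-1) := by
            have := (hmem1 (x-1) (by omega)).mp (by rwa [show x - 1 + 1 = x by omega])
            exact this
          have := Finset.le_max' _ _ this
          omega
      · exact Finset.le_max' _ _ hMin
    have hT : pdVal T (m-1) = (m-1) - M := by rw [pdVal_eq, dif_pos hne]
    have hTne : pdVal T (m-1) ≠ 0 := by omega
    rw [if_pos hTne, pdVal_eq, dif_pos hne', hmax, hT]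
    omega
  · have hT : pdVal T (m-1) = 0 := by rw [pdVal_eq, dif_neg hne]
    rw [if_neg (fun h => h hT)]
    have hsub : ∀ x ∈ Jset (a::T) m, x = 1 := by
      intro x hx
      by_contra hx1
      have hx2 : 2 ≤ x := by
        have := (mem_Jset.mp hx).1; omega
      exact hne ⟨x - 1, (hmem1 (x-1) (by omega)).mp
        (by rwa [show x - 1 + 1 = x by omega])⟩
    by_cases hcond : a ≤ T.getD (m-2) default
    · rw [if_pos hcond]
      have h1 : 1 ∈ Jset (a::T) m := hmem_one.mpr hcond
      have hne' : (Jset (a::T) m).Nonempty := ⟨1, h1⟩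
      have hmax : (Jset (a::T) m).max' hne' = 1 := hsub _ (Finset.max'_mem _ hne')
      rw [pdVal_eq, dif_pos hne', hmax]
    · rw [if_neg hcond, pdVal_eq, dif_neg]
      rintro ⟨x, hx⟩
      have := hsub x hx
      subst this
      exact hcond (hmem_one.mp hx)

lemma getD_lt_of_pdZero {T : List α} {u v : ℕ} (h1 : 1 ≤ u) (huv : u < v)
    (hv : pdVal T v = 0) : T.getD (v-1) default < T.getD (u-1) default := by
  have := pdVal_eq_zero_iff.mp hv u h1 huv
  exact lt_of_not_ge this

lemma fp_downward (a : α) (T : List α) {m m' : ℕ}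
    (hm2 : 2 ≤ m) (hmm' : m < m')
    (hz : pdVal T (m-1) = 0)
    (hm' : pdVal (a::T) m' = m' - 1) :
    pdVal (a::T) m = m - 1 := by
  have hm'2 : 2 ≤ m' := by omega
  have hz' : pdVal T (m'-1) = 0 := by
    by_contra hne
    rw [pdVal_cons a T hm'2, if_pos hne] at hm'
    have := pdVal_le T (m'-1)
    omega
  have hlt : T.getD (m'-1-1) default < T.getD (m-1-1) default :=
    getD_lt_of_pdZero (by omega) (by omega) hz'
  have ha : a ≤ T.getD (m'-2) default := by
    rw [pdVal_cons a T hm'2, if_neg (fun h => h hz')] at hm'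
    by_contra hc
    rw [if_neg hc] at hm'
    omega
  have ha2 : a ≤ T.getD (m-2) default := by
    have e1 : m' - 1 - 1 = m' - 2 := by omega
    have e2 : m - 1 - 1 = m - 2 := by omega
    rw [e1, e2] at hlt
    exact le_of_lt (lt_of_le_of_lt ha hlt)
  rw [pdVal_cons a T hm2, if_neg (fun h => h hz), if_pos ha2]

lemma PD_length (S : List α) : (PD S).length = S.length := by simp [PD]

lemma PD_getD (S : List α) {k : ℕ} (hk : k < S.length) :
    (PD S).getD k 0 = pdVal S (k+1) := by
  rw [List.getD_eq_getElem _ _ (by simpa [PD] using hk)]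
  simp [PD]

lemma frontPointers_PD (S : List α) :
    frontPointers (PD S) = (Finset.Icc 2 S.length).filter (fun k => pdVal S k = k - 1) := by
  unfold frontPointers
  rw [PD_length]
  apply Finset.filter_congr
  intro k hk
  simp only [Finset.mem_Icc] at hk
  rw [PD_getD S (by omega : k - 1 < S.length), show k - 1 + 1 = k by omega]
  have hle := pdVal_le S k
  constructor <;> intro h <;> omega

lemma FP_cons (a : α) (T : List α) :
    FP (a :: T) = (frontPointers (PD (a :: T))).card :: FP T := by
  unfold FP
  rw [show (a :: T).length = T.length + 1 from rfl, List.range_succ_eq_map,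
    List.map_cons, List.map_map]
  have h1 : FPval (a :: T) (0 + 1) = (frontPointers (PD (a :: T))).card := by
    simp [FPval]
  rw [h1]
  congr 1

lemma PD_ext_iff {β : Type*} [LinearOrder β] [Inhabited β] {S₁ : List α} {S₂ : List β}
    (hlen : S₁.length = S₂.length) :
    PD S₁ = PD S₂ ↔ ∀ k, 2 ≤ k → k ≤ S₁.length → pdVal S₁ k = pdVal S₂ k := by
  unfold PD
  rw [← hlen]
  constructor
  · intro h k hk2 hkl
    have := List.map_inj_left.mp h (k - 1) (by simp; omega)
    simpa [show k - 1 + 1 = k by omega] using this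
  · intro h
    apply List.map_inj_left.mpr
    intro k hk
    simp only [List.mem_range] at hk
    rcases Nat.eq_zero_or_pos k with rfl | hk0
    · rw [pdVal_one, pdVal_one]
    · exact h (k+1) (by omega) (by omega)

end

lemma key {α β : Type*} [LinearOrder α] [Inhabited α] [LinearOrder β] [Inhabited β] :
    ∀ (S₁ : List α) (S₂ : List β), S₁.length = S₂.length → (FP S₁ = FP S₂ ↔ PD S₁ = PD S₂) := by
  intro S₁
  induction S₁ with
  | nil =>
    intro S₂ hlen
    rw [List.length_nil] at hlen
    obtain rfl : S₂ = [] := List.eq_nil_of_length_eq_zero hlen.symm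
    simp [FP, PD]
  | cons a T₁ ih =>
    intro S₂ hlen
    cases S₂ with
    | nil => simp at hlen
    | cons b T₂ =>
      have hlen' : T₁.length = T₂.length := by simpa using hlen
      have hlenS₁ : (a :: T₁).length = T₁.length + 1 := rfl
      have hlenS₂ : (b :: T₂).length = T₁.length + 1 := by simp [hlen']
      have hmemA₁ : ∀ m, m ∈ frontPointers (PD (a :: T₁)) ↔
          (2 ≤ m ∧ m ≤ T₁.length + 1 ∧ pdVal (a :: T₁) m = m - 1) := by
        intro m
        rw [frontPointers_PD, hlenS₁]
        simp [Finset.mem_filter, Finset.mem_Icc, and_assoc]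
      have hmemA₂ : ∀ m, m ∈ frontPointers (PD (b :: T₂)) ↔
          (2 ≤ m ∧ m ≤ T₁.length + 1 ∧ pdVal (b :: T₂) m = m - 1) := by
        intro m
        rw [frontPointers_PD, hlenS₂]
        simp [Finset.mem_filter, Finset.mem_Icc, and_assoc]
      have hz₁ : ∀ m, 2 ≤ m → pdVal (a :: T₁) m = m - 1 → pdVal T₁ (m-1) = 0 := by
        intro m hm hv
        by_contra hne
        rw [pdVal_cons a T₁ hm, if_pos hne] at hv
        have := pdVal_le T₁ (m-1)
        omega
      have hz₂ : ∀ m, 2 ≤ m → pdVal (b :: T₂) m = m - 1 → pdVal T₂ (m-1) = 0 := by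
        intro m hm hv
        by_contra hne
        rw [pdVal_cons b T₂ hm, if_pos hne] at hv
        have := pdVal_le T₂ (m-1)
        omega
      constructor
      · -- FP → PD
        intro h
        rw [FP_cons, FP_cons] at h
        injection h with hcard htl
        have hPDT : PD T₁ = PD T₂ := (ih T₂ hlen').mp htl
        have hT : ∀ k, k ≤ T₁.length → pdVal T₁ k = pdVal T₂ k := by
          intro k hk
          rcases Nat.lt_or_ge k 2 with h2 | h2
          · have z1 : pdVal T₁ k = 0 :=
              pdVal_eq_zero_iff.mpr (fun j h1 hj => absurd hj (by omega))
            have z2 : pdVal T₂ k = 0 :=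
              pdVal_eq_zero_iff.mpr (fun j h1 hj => absurd hj (by omega))
            rw [z1, z2]
          · exact (PD_ext_iff hlen').mp hPDT k h2 hk
        -- A₁ = A₂
        have hAeq : frontPointers (PD (a :: T₁)) = frontPointers (PD (b :: T₂)) := by
          by_contra hneq
          have hns₁ : ¬ frontPointers (PD (a :: T₁)) ⊆ frontPointers (PD (b :: T₂)) :=
            fun hs => hneq (Finset.eq_of_subset_of_card_le hs (le_of_eq hcard.symm))
          have hns₂ : ¬ frontPointers (PD (b :: T₂)) ⊆ frontPointers (PD (a :: T₁)) :=
            fun hs => hneq (Finset.eq_of_subset_of_card_le hs (le_of_eq hcard)).symm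
          obtain ⟨m, hmA₁, hmA₂⟩ := Finset.not_subset.mp hns₁
          obtain ⟨m', hm'A₂, hm'A₁⟩ := Finset.not_subset.mp hns₂
          rw [hmemA₁] at hmA₁
          rw [hmemA₂] at hm'A₂
          obtain ⟨hm2, hmn, hmv⟩ := hmA₁
          obtain ⟨hm'2, hm'n, hm'v⟩ := hm'A₂
          have hmv₂ : pdVal (b :: T₂) m ≠ m - 1 :=
            fun hv => hmA₂ ((hmemA₂ m).mpr ⟨hm2, hmn, hv⟩)
          have hm'v₁ : pdVal (a :: T₁) m' ≠ m' - 1 :=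
            fun hv => hm'A₁ ((hmemA₁ m').mpr ⟨hm'2, hm'n, hv⟩)
          rcases Nat.lt_trichotomy m m' with hlt | heq | hgt
          · -- m < m' : show m ∈ A₂
            have hz : pdVal T₂ (m-1) = 0 := by
              rw [← hT (m-1) (by omega)]
              exact hz₁ m hm2 hmv
            exact hmv₂ (fp_downward b T₂ hm2 hlt hz hm'v)
          · exact hmv₂ (heq ▸ hm'v)
          · have hz : pdVal T₁ (m'-1) = 0 := by
              rw [hT (m'-1) (by omega)]
              exact hz₂ m' hm'2 hm'v
            exact hm'v₁ (fp_downward a T₁ hm'2 hgt hz hmv)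
        -- conclude PD equal
        rw [PD_ext_iff hlen]
        intro k hk2 hkl
        rw [hlenS₁] at hkl
        have ht : pdVal T₁ (k-1) = pdVal T₂ (k-1) := hT (k-1) (by omega)
        by_cases hz : pdVal T₁ (k-1) = 0
        · have hz' : pdVal T₂ (k-1) = 0 := ht ▸ hz
          have hv1 : pdVal (a :: T₁) k = k - 1 ∨ pdVal (a :: T₁) k = 0 := by
            rw [pdVal_cons a T₁ hk2, if_neg (fun hh => hh hz)]
            split <;> simp
          have hv2 : pdVal (b :: T₂) k = k - 1 ∨ pdVal (b :: T₂) k = 0 := by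
            rw [pdVal_cons b T₂ hk2, if_neg (fun hh => hh hz')]
            split <;> simp
          have hiff : pdVal (a :: T₁) k = k - 1 ↔ pdVal (b :: T₂) k = k - 1 := by
            constructor
            · intro hv
              exact ((hmemA₂ k).mp (hAeq ▸ (hmemA₁ k).mpr ⟨hk2, hkl, hv⟩)).2.2
            · intro hv
              exact ((hmemA₁ k).mp (hAeq ▸ (hmemA₂ k).mpr ⟨hk2, hkl, hv⟩)).2.2
          rcases hv1 with hv1 | hv1
          · rw [hv1, (hiff.mp hv1)]
          · rcases hv2 with hv2 | hv2
            · exact absurd (hiff.mpr hv2) (by omega)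
            · rw [hv1, hv2]
        · rw [pdVal_cons a T₁ hk2, pdVal_cons b T₂ hk2, if_pos hz, ht,
            if_pos (ht ▸ hz)]
      · -- PD → FP
        intro h
        have hpt := (PD_ext_iff hlen).mp h
        have hPDT : PD T₁ = PD T₂ := by
          rw [PD_ext_iff hlen']
          intro k hk2 hkl
          have h1 := hpt (k+1) (by omega) (by rw [hlenS₁]; omega)
          rw [pdVal_cons a T₁ (by omega), pdVal_cons b T₂ (by omega)] at h1
          simp only [Nat.add_sub_cancel] at h1
          have l1 := pdVal_le T₁ k
          have l2 := pdVal_le T₂ k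
          by_cases z1 : pdVal T₁ k = 0 <;> by_cases z2 : pdVal T₂ k = 0
          · rw [z1, z2]
          · rw [if_neg (fun hh => hh z1), if_pos z2] at h1
            exfalso; split_ifs at h1 <;> omega
          · rw [if_pos z1, if_neg (fun hh => hh z2)] at h1
            exfalso; split_ifs at h1 <;> omega
          · rw [if_pos z1, if_pos z2] at h1
            exact h1
        have hFPT : FP T₁ = FP T₂ := (ih T₂ hlen').mpr hPDT
        rw [FP_cons, FP_cons, h, hFPT]


/-- For equal-length strings, the FP encodings coincide iff the PD encodings do. -/
theorem stmt11 {α β : Type*} [LinearOrder α] [Inhabited α] [LinearOrder β] [Inhabited β]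
    (S₁ : List α) (S₂ : List β) (hlen : S₁.length = S₂.length) :
    FP S₁ = FP S₂ ↔ PD S₁ = PD S₂ := key S₁ S₂ hlen
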